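/- arXiv:cond-mat/0411726 — 4 statements merged into one kernel-verified Lean document; each statement's English description precedes it below -/
import Mathlib

section
/- Let X be a real random variable with symmetric distribution such that E[log cosh X] < ∞, and let t ∈ [−1,1]. Then E[log(1 + t·tanh X)] = −∑_{n=1}^∞ (t^{2n}/(2n))·E[tanh^{2n}(X)], both sides being finite. -/
/-!
Write `Z = t · tanh X`. Since `X` is symmetric and `tanh` is odd, `Z` is symmetric, so
`2 E[log(1 + Z)] = E[log(1 + Z)] + E[log(1 - Z)] = E[log(1 - Z²)]`. Expanding
`-log(1 - Z²) = ∑ Z^{2n}/n` and integrating term by term is justified by dominated convergence: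
the partial sums are dominated by the full sum `-log(1 - Z²) ≤ -log(1 - tanh² X) = 2 log cosh X`,
which is integrable by assumption.
-/

open MeasureTheory ProbabilityTheory Real

namespace Real

lemma measurable_tanh : Measurable tanh := by
  rw [funext tanh_eq_sinh_div_cosh]
  exact measurable_sinh.div measurable_cosh

lemma one_sub_tanh_sq (x : ℝ) : 1 - tanh x ^ 2 = (cosh x ^ 2)⁻¹ := by
  rw [tanh_eq_sinh_div_cosh, div_pow, cosh_sq]
  field_simp
  ring

lemma log_one_sub_tanh_sq (x : ℝ) : log (1 - tanh x ^ 2) = -(2 * log (cosh x)) := by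
  rw [one_sub_tanh_sq, log_inv, log_pow]
  push_cast
  ring

lemma abs_log_one_sub_sq_le {a x : ℝ} (ha : |a| ≤ |tanh x|) :
    |log (1 - a ^ 2)| ≤ 2 * log (cosh x) := by
  have hsq : a ^ 2 ≤ tanh x ^ 2 := sq_le_sq.mpr ha
  have htanh := tanh_sq_lt_one x
  rw [abs_of_nonpos (log_nonpos (by linarith) (by nlinarith)), ← neg_le_neg_iff, neg_neg,
    ← log_one_sub_tanh_sq]
  exact log_le_log (by linarith) (by linarith)

lemma log_one_sub_sq {a : ℝ} (ha : |a| < 1) : log (1 - a ^ 2) = log (1 + a) + log (1 - a) := by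
  obtain ⟨ha₁, ha₂⟩ := abs_lt.mp ha
  rw [← log_mul (by linarith) (by linarith)]
  ring_nf

-- `log (1 + a) = log (1 - a ^ 2) - log (1 - a)` and both `1 + a` and `1 - a` are below `2`.
lemma abs_log_one_add_le {a : ℝ} (ha : |a| < 1) : |log (1 + a)| ≤ log 2 - log (1 - a ^ 2) := by
  obtain ⟨ha₁, ha₂⟩ := abs_lt.mp ha
  have hprod := log_one_sub_sq ha
  have hplus : log (1 + a) ≤ log 2 := log_le_log (by linarith) (by linarith)
  have hminus : log (1 - a) ≤ log 2 := log_le_log (by linarith) (by linarith)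
  have hsq : log (1 - a ^ 2) ≤ 0 := log_nonpos (by nlinarith) (by nlinarith)
  rw [abs_le]
  constructor <;> linarith

end Real

section

variable {Ω : Type*} [MeasurableSpace Ω] {μ : Measure Ω}

lemma integrable_log_one_add_of_abs_lt_one [IsFiniteMeasure μ] {Z : Ω → ℝ}
    (hZ : AEMeasurable Z μ) (hZ₁ : ∀ ω, |Z ω| < 1)
    (hint : Integrable (fun ω => log (1 - Z ω ^ 2)) μ) :
    Integrable (fun ω => log (1 + Z ω)) μ :=
  ((integrable_const (log 2)).sub hint).mono'
    (measurable_log.comp_aemeasurable (hZ.const_add 1)).aestronglyMeasurable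
    (ae_of_all _ fun ω => abs_log_one_add_le (hZ₁ ω))

lemma hasSum_integral_pow_div_log_of_abs_lt_one {f : Ω → ℝ} (hf : AEMeasurable f μ)
    (hf₁ : ∀ ω, |f ω| < 1) (hint : Integrable (fun ω => log (1 - |f ω|)) μ) :
    HasSum (fun n : ℕ => ∫ ω, f ω ^ (n + 1) / (n + 1) ∂μ) (-∫ ω, log (1 - f ω) ∂μ) := by
  have hseries (ω : Ω) := hasSum_pow_div_log_of_abs_lt_one (hf₁ ω)
  have habs_series (ω : Ω) :=
    hasSum_pow_div_log_of_abs_lt_one (x := |f ω|) (by rw [abs_abs]; exact hf₁ ω)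
  rw [← integral_neg]
  refine hasSum_integral_of_dominated_convergence (fun n ω => |f ω| ^ (n + 1) / (n + 1))
    (fun n => ((hf.pow_const _).div_const _).aestronglyMeasurable)
    (fun n => ae_of_all _ fun ω => ?_)
    (ae_of_all _ fun ω => (habs_series ω).summable) ?_ (ae_of_all _ hseries)
  · rw [norm_div, norm_pow, Real.norm_eq_abs, Real.norm_eq_abs,
      abs_of_pos (a := (n : ℝ) + 1) (by positivity)]
  · simp only [fun ω => (habs_series ω).tsum_eq]
    exact hint.neg

lemma hasSum_integral_pow_div_of_identDistrib_neg [IsFiniteMeasure μ] {Z : Ω → ℝ}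
    (hsymm : IdentDistrib Z (-Z) μ μ) (hZ₁ : ∀ ω, |Z ω| < 1)
    (hint : Integrable (fun ω => log (1 - Z ω ^ 2)) μ) :
    HasSum (fun n : ℕ => ∫ ω, Z ω ^ (2 * (n + 1)) / (2 * (n + 1)) ∂μ)
      (-∫ ω, log (1 + Z ω) ∂μ) := by
  have hZ := hsymm.aemeasurable_fst
  have hplus := integrable_log_one_add_of_abs_lt_one hZ hZ₁ hint
  have hminus : Integrable (fun ω => log (1 - Z ω)) μ := by
    simpa only [Pi.neg_apply, abs_neg, neg_sq, sub_eq_add_neg] using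
      integrable_log_one_add_of_abs_lt_one hZ.neg (fun ω => by simpa using hZ₁ ω)
        (by simpa using hint)
  have heq : ∫ ω, log (1 + Z ω) ∂μ = ∫ ω, log (1 - Z ω) ∂μ := by
    simpa [Function.comp_def, sub_eq_add_neg] using
      (hsymm.comp (measurable_log.comp (measurable_const_add 1))).integral_eq
  have hsplit : ∫ ω, log (1 - Z ω ^ 2) ∂μ = ∫ ω, log (1 + Z ω) ∂μ + ∫ ω, log (1 - Z ω) ∂μ := by
    rw [← integral_add hplus hminus]
    exact integral_congr_ae (ae_of_all _ fun ω => log_one_sub_sq (hZ₁ ω))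
  have hsq_lt (ω : Ω) : |Z ω ^ 2| < 1 := by
    rw [abs_pow, sq_lt_one_iff_abs_lt_one, abs_abs]
    exact hZ₁ ω
  have hseries := hasSum_integral_pow_div_log_of_abs_lt_one (hZ.pow_const 2)
    hsq_lt (by simpa only [abs_sq] using hint)
  have hterm (n : ℕ) : ∫ ω, Z ω ^ (2 * (n + 1)) / (2 * (n + 1)) ∂μ
      = (∫ ω, (Z ω ^ 2) ^ (n + 1) / (n + 1) ∂μ) / 2 := by
    rw [← integral_div]
    congr 1 with ω
    rw [← pow_mul]
    field_simp
  have hvalue : -∫ ω, log (1 + Z ω) ∂μ = (-∫ ω, log (1 - Z ω ^ 2) ∂μ) / 2 := by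
    rw [hsplit, ← heq]
    ring
  rw [funext hterm, hvalue]
  exact hseries.div_const 2

end

/-- If `X` is a symmetric real random variable with `E[log cosh X] < ∞` and
`t ∈ [−1,1]`, then `E[log(1 + t·tanh X)] = −∑_{n=1}^∞ (t^{2n}/(2n))·E[tanh^{2n} X]`,
both sides being finite. -/
theorem integral_log_one_add_tanh (Ω : Type) [MeasureSpace Ω]
    [IsProbabilityMeasure (ℙ : Measure Ω)]
    (X : Ω → ℝ) (hXmeas : Measurable X)
    (hXsymm : Measure.map X ℙ = Measure.map (fun ω => -X ω) ℙ)
    (hXint : Integrable (fun ω => Real.log (Real.cosh (X ω))) ℙ)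
    (t : ℝ) (ht : t ∈ Set.Icc (-1 : ℝ) 1) :
    Integrable (fun ω => Real.log (1 + t * Real.tanh (X ω))) ℙ ∧
    Summable (fun n : ℕ =>
      t ^ (2 * (n + 1)) / (2 * (n + 1) : ℝ) * ∫ ω, Real.tanh (X ω) ^ (2 * (n + 1)) ∂ℙ) ∧
    ∫ ω, Real.log (1 + t * Real.tanh (X ω)) ∂ℙ
      = -∑' n : ℕ,
          t ^ (2 * (n + 1)) / (2 * (n + 1) : ℝ) * ∫ ω, Real.tanh (X ω) ^ (2 * (n + 1)) ∂ℙ := by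
  set Z : Ω → ℝ := fun ω => t * tanh (X ω)
  have hZ_le (ω : Ω) : |Z ω| ≤ |tanh (X ω)| := by
    rw [abs_mul]
    exact mul_le_of_le_one_left (abs_nonneg _) (abs_le.mpr ht)
  have hZ₁ (ω : Ω) : |Z ω| < 1 := (hZ_le ω).trans_lt (abs_tanh_lt_one _)
  have hZmeas : Measurable Z := (measurable_tanh.comp hXmeas).const_mul t
  have hsymm : IdentDistrib Z (-Z) := by
    have h := (IdentDistrib.mk hXmeas.aemeasurable hXmeas.neg.aemeasurable hXsymm).comp
      (measurable_tanh.const_mul t)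
    simp only [Function.comp_def, Pi.neg_apply, tanh_neg, mul_neg] at h
    exact h
  have hint : Integrable (fun ω => log (1 - Z ω ^ 2)) ℙ :=
    (hXint.const_mul 2).mono'
      (measurable_log.comp ((hZmeas.pow_const 2).const_sub 1)).aestronglyMeasurable
      (ae_of_all _ fun ω => abs_log_one_sub_sq_le (hZ_le ω))
  have hsum : HasSum (fun n : ℕ =>
      t ^ (2 * (n + 1)) / (2 * (n + 1) : ℝ) * ∫ ω, tanh (X ω) ^ (2 * (n + 1)) ∂ℙ)
      (-∫ ω, log (1 + Z ω) ∂ℙ) := by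
    convert hasSum_integral_pow_div_of_identDistrib_neg hsymm hZ₁ hint using 2 with n
    rw [← integral_const_mul]
    congr 1 with ω
    rw [mul_pow]
    ring
  exact ⟨integrable_log_one_add_of_abs_lt_one hZmeas.aemeasurable hZ₁ hint, hsum.summable,
    by rw [hsum.tsum_eq, neg_neg]⟩
end

section
/- Let f : ℕ → ℝ satisfy |f(m)| ≤ C·(1+m)^d for all m and some constants C ≥ 0, d ∈ ℕ. Then the function λ ↦ E[f(P_λ)] = ∑_{m=0}^∞ e^{−λ} λ^m/m! · f(m) is differentiable on (0,∞), with derivative E[f(P_λ + 1)] − E[f(P_λ)] = ∑_{m=0}^∞ e^{−λ} λ^m/m! · (f(m+1) − f(m)). -/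
/-!
With `F(λ) = ∑ f(m) λ^m/m!` the exponential generating function of `f`, the expectation is
`e^{-λ} F(λ)`. Polynomial (indeed any exponential) growth of `f` makes the series for `F` and for
its termwise derivative, the generating function of `f(· + 1)`, converge locally uniformly, so
`F' = ∑ f(m+1) λ^m/m!` and the product rule gives `e^{-λ} (F' - F)(λ)`.
-/

open Filter Asymptotics Nat

theorem summable_pow_div_factorial_mul_of_isBigO {a : ℕ → ℝ} {c : ℝ}
    (ha : a =O[atTop] (c ^ ·)) (x : ℝ) : Summable (fun n => x ^ n / n ! * a n) := by
  refine summable_of_isBigO_nat (Real.summable_pow_div_factorial (x * c)) ?_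
  simpa only [mul_pow, mul_div_right_comm] using (isBigO_refl (fun n => x ^ n / n !) atTop).mul ha

theorem Asymptotics.IsBigO.comp_succ_of_pow {a : ℕ → ℝ} {c : ℝ}
    (ha : a =O[atTop] (c ^ ·)) : (fun n => a (n + 1)) =O[atTop] (c ^ ·) :=
  (ha.comp_tendsto (tendsto_add_atTop_nat 1)).trans <|
    ((isBigO_refl (c ^ ·) atTop).const_mul_left c).congr_left fun n => (pow_succ' c n).symm

theorem hasDerivAt_pow_succ_div_factorial_succ (n : ℕ) (x : ℝ) :
    HasDerivAt (fun y : ℝ => y ^ (n + 1) / (n + 1)!) (x ^ n / n !) x := by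
  refine ((hasDerivAt_pow (n + 1) x).div_const _).congr_deriv ?_
  rw [Nat.factorial_succ, Nat.cast_mul, Nat.add_sub_cancel, Nat.cast_succ, mul_div_mul_left]
  positivity

theorem hasDerivAt_tsum_pow_div_factorial_mul {a : ℕ → ℝ} {c : ℝ}
    (ha : a =O[atTop] (c ^ ·)) (x : ℝ) :
    HasDerivAt (fun y => ∑' n, y ^ n / n ! * a n) (∑' n, x ^ n / n ! * a (n + 1)) x := by
  have hshift : (fun y => ∑' n, y ^ n / n ! * a n)
      = fun y => a 0 + ∑' n, y ^ (n + 1) / (n + 1)! * a (n + 1) := by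
    ext y
    simp [(summable_pow_div_factorial_mul_of_isBigO ha y).tsum_eq_zero_add]
  set R := |x| + 1
  have hx : x ∈ Set.Ioo (-R) R := abs_lt.mp (by linarith)
  have hbound : ∀ n, ∀ y ∈ Set.Ioo (-R) R,
      ‖y ^ n / n ! * a (n + 1)‖ ≤ R ^ n / n ! * ‖a (n + 1)‖ := by
    intro n y hy
    rw [norm_mul, norm_div, norm_pow, Real.norm_natCast]
    gcongr
    exact (abs_lt.mpr hy).le
  rw [hshift]
  refine HasDerivAt.const_add _ <| hasDerivAt_tsum_of_isPreconnected
    (summable_pow_div_factorial_mul_of_isBigO ha.comp_succ_of_pow.norm_left R) isOpen_Ioo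
    isPreconnected_Ioo (fun n y _ => (hasDerivAt_pow_succ_div_factorial_succ n y).mul_const _)
    hbound hx ?_ hx
  exact (summable_nat_add_iff 1).mpr (summable_pow_div_factorial_mul_of_isBigO ha x)

theorem hasDerivAt_tsum_exp_neg_mul_pow_div_factorial_mul {f : ℕ → ℝ} {c : ℝ}
    (hf : f =O[atTop] (c ^ ·)) (x : ℝ) :
    HasDerivAt (fun l => ∑' m, Real.exp (-l) * l ^ m / m ! * f m)
      (∑' m, Real.exp (-x) * x ^ m / m ! * (f (m + 1) - f m)) x := by
  have hsucc := summable_pow_div_factorial_mul_of_isBigO hf.comp_succ_of_pow x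
  have hself := summable_pow_div_factorial_mul_of_isBigO hf x
  simp only [mul_div_assoc, mul_assoc, tsum_mul_left, mul_sub (_ / _)]
  rw [hsucc.tsum_sub hself]
  exact ((hasDerivAt_neg x).exp.fun_mul (hasDerivAt_tsum_pow_div_factorial_mul hf x)).congr_deriv
    (by ring)

theorem isBigO_two_pow_pow_of_abs_le_mul_one_add_pow {f : ℕ → ℝ} {C : ℝ} {d : ℕ}
    (hf : ∀ m : ℕ, |f m| ≤ C * (1 + m : ℝ) ^ d) : f =O[atTop] ((2 ^ d : ℝ) ^ ·) := by
  have hpoly : f =O[atTop] (fun m : ℕ => (1 + m : ℝ) ^ d) :=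
    IsBigO.of_bound C <| Eventually.of_forall fun m => by
      rw [Real.norm_eq_abs, Real.norm_of_nonneg (by positivity)]
      exact hf m
  refine hpoly.trans <| IsBigO.of_bound 1 <| Eventually.of_forall fun m => ?_
  rw [Real.norm_of_nonneg (by positivity), Real.norm_of_nonneg (by positivity), one_mul,
    ← pow_mul, mul_comm, pow_mul]
  gcongr
  exact_mod_cast Nat.one_add_le_iff.mpr Nat.lt_two_pow_self

theorem poisson_expectation_hasDerivAt_general (f : ℕ → ℝ) (C : ℝ) (d : ℕ)
    (hf : ∀ m : ℕ, |f m| ≤ C * (1 + m : ℝ) ^ d) :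
    ∀ lam ∈ Set.Ioi (0 : ℝ),
      HasDerivAt
        (fun l : ℝ => ∑' m : ℕ, Real.exp (-l) * l ^ m / (Nat.factorial m) * f m)
        (∑' m : ℕ, Real.exp (-lam) * lam ^ m / (Nat.factorial m) * (f (m + 1) - f m))
        lam :=
  fun lam _ => hasDerivAt_tsum_exp_neg_mul_pow_div_factorial_mul
    (isBigO_two_pow_pow_of_abs_le_mul_one_add_pow hf) lam

/-- If `f : ℕ → ℝ` has polynomial growth `|f(m)| ≤ C(1+m)^d`, then
`λ ↦ E[f(P_λ)] = ∑_m e^{−λ} λ^m/m! · f(m)` is differentiable on `(0,∞)` with derivative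
`E[f(P_λ+1)] − E[f(P_λ)] = ∑_m e^{−λ} λ^m/m! · (f(m+1) − f(m))`. -/
theorem poisson_expectation_hasDerivAt (f : ℕ → ℝ) (C : ℝ) (hC : 0 ≤ C) (d : ℕ)
    (hf : ∀ m : ℕ, |f m| ≤ C * (1 + m : ℝ) ^ d) :
    ∀ lam ∈ Set.Ioi (0 : ℝ),
      HasDerivAt
        (fun l : ℝ => ∑' m : ℕ, Real.exp (-l) * l ^ m / (Nat.factorial m) * f m)
        (∑' m : ℕ, Real.exp (-lam) * lam ^ m / (Nat.factorial m) * (f (m + 1) - f m))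
        lam :=
  poisson_expectation_hasDerivAt_general f C d hf
end

section
/- Let β > 0, let n ≥ 1 be an integer, and let J be a real random variable with symmetric distribution and 0 < E[J²] < ∞. For α ≥ 0 let M_α be Poisson with mean 2α, independent of i.i.d. copies (J_ν)_{ν≥1} of J, and set q̃_{2n}(α) := E[tanh^{2n}(β ∑_{ν=1}^{M_α} J_ν)]. Then q̃_{2n} is continuous on [0,∞), q̃_{2n}(0) = 0, and lim_{α→∞} q̃_{2n}(α) = 1; consequently, for every x ∈ [0,1) there exists α ≥ 0 with q̃_{2n}(α) = x. -/
open MeasureTheory ProbabilityTheory Filter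

noncomputable def poissonWeight (l : ℝ) (m : ℕ) : ℝ :=
  Real.exp (-l) * l ^ m / (Nat.factorial m)

/-!
The Poisson weights `poissonWeight (2α) m` form a probability vector that depends continuously
on `α`, is the point mass at `0` for `α = 0` and escapes to infinity as `α → ∞`. Hence the
mixture `α ↦ ∑ₘ poissonWeight (2α) m * aₘ` of the bounded sequence
`aₘ = E[tanh^{2n}(β Sₘ)]`, `Sₘ = J₀ + ⋯ + J_{m-1}`, is continuous, equals `a₀ = 0` at `α = 0`
and tends to `lim aₘ`; the intermediate value theorem then gives every value in `[0, 1)`.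

That `aₘ → 1` follows from the central limit theorem. By symmetry `J` is centred, so
`Sₘ / √m` converges in law to a Gaussian `G` of positive variance. The function
`f(s) = 1 - tanh^{2n}(β s)` decreases in `|s|`, so `E f(Sₘ) ≤ E f(c Sₘ / √m)` once `√m ≥ c`;
the right side tends to `E f(c G)`, which is small for large `c` because `G` has no atom at `0`.
-/

open Real Set Topology

namespace Real

@[fun_prop]
lemma continuous_tanh : Continuous tanh := by
  simp_rw [funext tanh_eq_sinh_div_cosh]
  exact continuous_sinh.div continuous_cosh fun x => (cosh_pos x).ne'

lemma tanh_strictMono : StrictMono tanh := by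
  intro x y hxy
  by_contra! h
  have := strictMonoOn_artanh.monotoneOn ⟨neg_one_lt_tanh y, tanh_lt_one y⟩
    ⟨neg_one_lt_tanh x, tanh_lt_one x⟩ h
  rw [artanh_tanh, artanh_tanh] at this
  exact this.not_gt hxy

lemma tanh_nonneg {x : ℝ} (hx : 0 ≤ x) : 0 ≤ tanh x :=
  tanh_zero ▸ tanh_strictMono.monotone hx

lemma tendsto_tanh_atTop : Tendsto tanh atTop (𝓝 1) := by
  have h : ∀ x, tanh x = 1 - 2 / (exp (2 * x) + 1) := fun x => by
    rw [tanh_eq, exp_neg, show 2 * x = x + x by ring, exp_add]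
    field_simp
    ring
  refine Tendsto.congr (fun x => (h x).symm) ?_
  simpa using tendsto_const_nhds.sub <| tendsto_const_nhds.div_atTop <|
    tendsto_atTop_add_const_right _ 1 <| tendsto_exp_atTop.comp <|
      tendsto_id.const_mul_atTop two_pos

lemma tanh_abs_pow_two_mul (x : ℝ) (n : ℕ) : tanh |x| ^ (2 * n) = tanh x ^ (2 * n) := by
  rcases abs_cases x with ⟨h, -⟩ | ⟨h, -⟩ <;> simp [h, tanh_neg, pow_mul]

lemma abs_tanh_pow_le_one (x : ℝ) (k : ℕ) : |tanh x ^ k| ≤ 1 := by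
  rw [abs_pow]
  exact pow_le_one₀ (abs_nonneg _) (abs_tanh_lt_one x).le

end Real

lemma poissonWeight_nonneg {l : ℝ} (hl : 0 ≤ l) (m : ℕ) : 0 ≤ poissonWeight l m := by
  unfold poissonWeight; positivity

lemma hasSum_poissonWeight (l : ℝ) : HasSum (poissonWeight l) 1 := by
  have h := (NormedSpace.expSeries_div_hasSum_exp l).mul_left (exp (-l))
  rw [← exp_eq_exp_ℝ, ← exp_add, neg_add_cancel, exp_zero] at h
  exact h.congr_fun fun m => mul_div_assoc ..

@[fun_prop]
lemma continuous_poissonWeight (m : ℕ) : Continuous (poissonWeight · m) := by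
  unfold poissonWeight; fun_prop

lemma tendsto_poissonWeight_atTop (m : ℕ) : Tendsto (poissonWeight · m) atTop (𝓝 0) := by
  simpa [poissonWeight, mul_comm] using
    (tendsto_pow_mul_exp_neg_atTop_nhds_zero m).div_const (m.factorial : ℝ)

lemma poissonWeight_zero_left : poissonWeight 0 = Pi.single 0 1 := by
  ext m; rcases m with _ | m <;> simp [poissonWeight]

lemma tendsto_tsum_mul_of_tendsto {ι : Type*} {l : Filter ι} {w : ι → ℕ → ℝ}
    (hw0 : ∀ᶠ i in l, ∀ m, 0 ≤ w i m) (hw1 : ∀ i, HasSum (w i) 1)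
    (hw : ∀ m, Tendsto (w · m) l (𝓝 0)) {a : ℕ → ℝ} {L : ℝ} (ha : Tendsto a atTop (𝓝 L)) :
    Tendsto (fun i => ∑' m, w i m * a m) l (𝓝 L) := by
  obtain ⟨B, hB⟩ := isBounded_iff_forall_norm_le.1 <|
    Metric.isBounded_range_of_tendsto _ (ha.sub_const L)
  have hsum : ∀ᶠ i in l, Summable fun m => w i m * (a m - L) := by
    filter_upwards [hw0] with i hi
    refine .of_norm_bounded ((hw1 i).summable.mul_right B) fun m => ?_
    rw [norm_mul, Real.norm_of_nonneg (hi m)]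
    exact mul_le_mul_of_nonneg_left (hB _ ⟨m, rfl⟩) (hi m)
  have hsub : ∀ᶠ i in l, ∑' m, w i m * (a m - L) = ∑' m, w i m * a m - L := by
    filter_upwards [hsum] with i hc
    have hwL : HasSum (fun m => w i m * L) L := by simpa using (hw1 i).mul_right L
    have hwa : Summable fun m => w i m * a m := (hc.add hwL.summable).congr fun m => by ring
    simp_rw [mul_sub]
    rw [hwa.tsum_sub hwL.summable, hwL.tsum_eq]
  rw [← tendsto_sub_nhds_zero_iff]
  refine Tendsto.congr' hsub (Metric.tendsto_nhds.2 fun ε hε => ?_)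
  obtain ⟨M, hM⟩ := Metric.tendsto_atTop.1 ha (ε / 2) (half_pos hε)
  have hhead : Tendsto (fun i => ∑ m ∈ Finset.range M, w i m * (a m - L)) l (𝓝 0) := by
    simpa using tendsto_finsetSum _ fun m _ => (hw m).mul_const (a m - L)
  filter_upwards [hw0, hsum, Metric.tendsto_nhds.1 hhead (ε / 2) (half_pos hε)]
    with i hi hc hhead_i
  have htail : HasSum (fun m => ε / 2 * w i (m + M))
      (ε / 2 * (1 - ∑ m ∈ Finset.range M, w i m)) :=
    ((hasSum_nat_add_iff' M).2 (hw1 i)).mul_left _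
  have htail_le : ‖∑' m, w i (m + M) * (a (m + M) - L)‖ ≤ ε / 2 := by
    refine (tsum_of_norm_bounded htail fun m => ?_).trans ?_
    · rw [norm_mul, Real.norm_of_nonneg (hi _), mul_comm]
      exact mul_le_mul_of_nonneg_right (hM _ (by omega)).le (hi _)
    · have := Finset.sum_nonneg fun m (_ : m ∈ Finset.range M) => hi m
      nlinarith
  rw [dist_zero_right, ← hc.sum_add_tsum_nat_add M]
  rw [dist_zero_right] at hhead_i
  calc _ ≤ _ := norm_add_le _ _
    _ < ε / 2 + ε / 2 := add_lt_add_of_lt_of_le hhead_i htail_le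
    _ = ε := add_halves ε

lemma continuous_tsum_poissonWeight_mul {a : ℕ → ℝ} {B : ℝ} (ha : ∀ m, |a m| ≤ B) :
    Continuous fun l => ∑' m, poissonWeight l m * a m := by
  refine continuous_iff_continuousAt.2 fun x => ?_
  set C := |x| + 1
  have hbound : ∀ m, ∀ l ∈ Icc (-C) C,
      ‖poissonWeight l m * a m‖ ≤ exp C * C ^ m / m.factorial * B := by
    intro m l hl
    have hB : 0 ≤ B := (abs_nonneg _).trans (ha 0)
    rw [norm_mul, Real.norm_eq_abs, Real.norm_eq_abs, poissonWeight, abs_div, abs_mul, abs_pow,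
      abs_exp, Nat.abs_cast]
    gcongr
    · linarith [hl.1]
    · exact abs_le.2 hl
    · exact ha m
  have hsum : Summable fun m : ℕ => exp C * C ^ m / m.factorial * B := by
    simpa only [mul_div_assoc] using
      ((summable_pow_div_factorial C).mul_left (exp C)).mul_right B
  exact (continuousOn_tsum (fun m => by fun_prop) hsum hbound).continuousAt
    (Icc_mem_nhds (by linarith [neg_abs_le x]) (by linarith [le_abs_self x]))

lemma tsum_poissonWeight_zero_mul (a : ℕ → ℝ) : ∑' m, poissonWeight 0 m * a m = a 0 := by
  simp [poissonWeight_zero_left, Pi.single_apply]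

lemma tendsto_tsum_poissonWeight_mul_atTop {a : ℕ → ℝ} {L : ℝ} (ha : Tendsto a atTop (𝓝 L)) :
    Tendsto (fun l => ∑' m, poissonWeight l m * a m) atTop (𝓝 L) :=
  tendsto_tsum_mul_of_tendsto
    ((eventually_ge_atTop 0).mono fun _ hl => poissonWeight_nonneg hl)
    hasSum_poissonWeight tendsto_poissonWeight_atTop ha

lemma integral_eq_zero_of_map_eq_map_neg {Ω : Type*} [MeasurableSpace Ω] {P : Measure Ω}
    {X : Ω → ℝ} (hX : AEMeasurable X P) (hsymm : P.map X = P.map fun ω => -X ω) :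
    P[X] = 0 := by
  have h : ∫ ω, X ω ∂P = ∫ ω, -X ω ∂P :=
    calc ∫ ω, X ω ∂P = ∫ x, x ∂(P.map X) :=
          (integral_map (f := fun x => x) hX aestronglyMeasurable_id).symm
      _ = ∫ ω, -X ω ∂P := by
          rw [hsymm]
          exact integral_map (f := fun x => x) hX.neg aestronglyMeasurable_id
  rw [integral_neg] at h
  linarith

lemma MeasureTheory.TendstoInDistribution.tendsto_integral_comp {Ω Ω' : Type*}
    [MeasurableSpace Ω] [MeasurableSpace Ω'] {P : Measure Ω} {P' : Measure Ω'}
    [IsProbabilityMeasure P] [IsProbabilityMeasure P'] {Z : ℕ → Ω → ℝ} {Y : Ω' → ℝ}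
    (hZ : TendstoInDistribution Z atTop Y (fun _ => P) P') (g : BoundedContinuousFunction ℝ ℝ) :
    Tendsto (fun m => ∫ ω, g (Z m ω) ∂P) atTop (𝓝 (∫ ω, g (Y ω) ∂P')) := by
  have := ProbabilityMeasure.tendsto_iff_forall_integral_tendsto.1 hZ.tendsto g
  simp only [ProbabilityMeasure.coe_mk] at this
  rwa [integral_map hZ.aemeasurable_limit g.continuous.aestronglyMeasurable,
    funext fun m => integral_map (hZ.forall_aemeasurable m) g.continuous.aestronglyMeasurable]
    at this

structure IsRadialDecay (f : ℝ → ℝ) : Prop where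
  continuous : Continuous f
  nonneg : ∀ x, 0 ≤ f x
  antitone_abs : ∀ x y, |x| ≤ |y| → f y ≤ f x
  tendsto_atTop : Tendsto f atTop (𝓝 0)

namespace IsRadialDecay

variable {f : ℝ → ℝ}

lemma apply_abs (hf : IsRadialDecay f) (x : ℝ) : f |x| = f x :=
  le_antisymm (hf.antitone_abs _ _ (abs_abs x).ge) (hf.antitone_abs _ _ (abs_abs x).le)

lemma norm_le_apply_zero (hf : IsRadialDecay f) (x : ℝ) : ‖f x‖ ≤ f 0 := by
  rw [Real.norm_of_nonneg (hf.nonneg x)]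
  exact hf.antitone_abs _ _ (by simp)

lemma tendsto_comp_mul_atTop (hf : IsRadialDecay f) {y : ℝ} (hy : y ≠ 0) :
    Tendsto (fun c => f (c * y)) atTop (𝓝 0) := by
  refine (hf.tendsto_atTop.comp (tendsto_id.atTop_mul_const (abs_pos.2 hy))).congr' ?_
  filter_upwards [eventually_ge_atTop 0] with c hc
  simp [← hf.apply_abs (c * y), abs_mul, abs_of_nonneg hc]

variable {Ω : Type*} [MeasurableSpace Ω] {P : Measure Ω} [IsProbabilityMeasure P]

lemma integrable_comp (hf : IsRadialDecay f) {X : Ω → ℝ} (hX : AEMeasurable X P) :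
    Integrable (fun ω => f (X ω)) P :=
  .of_bound (hf.continuous.measurable.comp_aemeasurable hX).aestronglyMeasurable (f 0)
    (ae_of_all _ fun _ => hf.norm_le_apply_zero _)

lemma tendsto_integral_comp_mul_atTop (hf : IsRadialDecay f) {Y : Ω → ℝ} (hY : AEMeasurable Y P)
    (hY0 : ∀ᵐ ω ∂P, Y ω ≠ 0) :
    Tendsto (fun c => ∫ ω, f (c * Y ω) ∂P) atTop (𝓝 0) := by
  simpa using tendsto_integral_filter_of_dominated_convergence (fun _ => f 0)
    (.of_forall fun c => (hf.integrable_comp (hY.const_mul c)).aestronglyMeasurable)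
    (.of_forall fun c => ae_of_all _ fun ω => hf.norm_le_apply_zero _) (integrable_const _)
    (hY0.mono fun ω hω => hf.tendsto_comp_mul_atTop hω)

lemma tendsto_integral_comp_sqrt_mul (hf : IsRadialDecay f) {Ω' : Type*} [MeasurableSpace Ω']
    {P' : Measure Ω'} [IsProbabilityMeasure P'] {Z : ℕ → Ω → ℝ} {Y : Ω' → ℝ}
    (hZ : TendstoInDistribution Z atTop Y (fun _ => P) P') (hY0 : ∀ᵐ ω ∂P', Y ω ≠ 0) :
    Tendsto (fun m : ℕ => ∫ ω, f (√m * Z m ω) ∂P) atTop (𝓝 0) := by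
  have hscale (c : ℝ) :
      Tendsto (fun m => ∫ ω, f (c * Z m ω) ∂P) atTop (𝓝 (∫ ω, f (c * Y ω) ∂P')) :=
    hZ.tendsto_integral_comp <| .ofNormedAddCommGroup (fun x => f (c * x))
      (hf.continuous.comp (continuous_const_mul c)) (f 0) fun _ => hf.norm_le_apply_zero _
  refine tendsto_order.2 ⟨fun a ha => .of_forall fun m =>
    ha.trans_le (integral_nonneg fun ω => hf.nonneg _), fun b hb => ?_⟩
  obtain ⟨c, hc, hc0⟩ := ((hf.tendsto_integral_comp_mul_atTop hZ.aemeasurable_limit hY0).eventually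
    (gt_mem_nhds hb) |>.and (eventually_ge_atTop 0)).exists
  filter_upwards [(hscale c).eventually (gt_mem_nhds hc), eventually_ge_atTop ⌈c ^ 2⌉₊]
    with m hm hmc
  have hZm := hZ.forall_aemeasurable m
  refine (integral_mono (hf.integrable_comp (hZm.const_mul _))
    (hf.integrable_comp (hZm.const_mul c)) fun ω => hf.antitone_abs _ _ ?_).trans_lt hm
  rw [abs_mul, abs_mul, abs_of_nonneg hc0, abs_of_nonneg (sqrt_nonneg _)]
  gcongr
  exact (le_sqrt hc0 m.cast_nonneg).2 (Nat.ceil_le.1 hmc)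

lemma tendsto_integral_comp_sum (hf : IsRadialDecay f) {X : ℕ → Ω → ℝ}
    (hX : MemLp (X 0) 2 P) (hmean : P[X 0] = 0) (hvar : Var[X 0; P] ≠ 0)
    (hindep : iIndepFun X P) (hident : ∀ i, IdentDistrib (X i) (X 0) P P) :
    Tendsto (fun m : ℕ => ∫ ω, f (∑ k ∈ Finset.range m, X k ω) ∂P) atTop (𝓝 0) := by
  have hv : Var[X 0; P].toNNReal ≠ 0 := by
    simpa using (variance_nonneg (X 0) P).lt_of_ne' hvar
  have := nullSingletonClass_gaussianReal (μ := 0) hv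
  have hclt := tendstoInDistribution_inv_sqrt_mul_sum_sub HasLaw.id hX hindep hident
  refine (hf.tendsto_integral_comp_sqrt_mul hclt (Measure.ae_ne _ 0)).congr' ?_
  filter_upwards [eventually_ge_atTop 1] with m hm
  simp_rw [hmean, mul_zero, sub_zero, mul_inv_cancel_left₀ (sqrt_ne_zero'.2 (Nat.cast_pos.2 hm))]

end IsRadialDecay

lemma isRadialDecay_one_sub_tanh_pow {β : ℝ} (hβ : β ≠ 0) (n : ℕ) :
    IsRadialDecay fun s => 1 - tanh (β * s) ^ (2 * n) where
  continuous := by fun_prop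
  nonneg s := by
    rw [sub_nonneg]
    exact (le_abs_self _).trans (abs_tanh_pow_le_one _ _)
  antitone_abs x y hxy := by
    rw [← tanh_abs_pow_two_mul (β * x), ← tanh_abs_pow_two_mul (β * y), sub_le_sub_iff_left]
    refine pow_le_pow_left₀ (tanh_nonneg (abs_nonneg _)) (tanh_strictMono.monotone ?_) _
    rw [abs_mul, abs_mul]
    gcongr
  tendsto_atTop := by
    have h := ((tendsto_tanh_atTop.comp (tendsto_id.const_mul_atTop (abs_pos.2 hβ))).pow
      (2 * n)).const_sub 1
    rw [one_pow, sub_self] at h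
    refine h.congr' ?_
    filter_upwards [eventually_ge_atTop 0] with s hs
    simp [← tanh_abs_pow_two_mul (β * s), abs_mul, abs_of_nonneg hs]

lemma tendsto_integral_tanh_mul_sum_pow {Ω : Type*} [MeasurableSpace Ω] {P : Measure Ω}
    [IsProbabilityMeasure P] {X : ℕ → Ω → ℝ} (hX : MemLp (X 0) 2 P) (hmean : P[X 0] = 0)
    (hvar : Var[X 0; P] ≠ 0) (hindep : iIndepFun X P)
    (hident : ∀ i, IdentDistrib (X i) (X 0) P P) {β : ℝ} (hβ : β ≠ 0) (n : ℕ) :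
    Tendsto (fun m : ℕ => ∫ ω, tanh (β * ∑ k ∈ Finset.range m, X k ω) ^ (2 * n) ∂P)
      atTop (𝓝 1) := by
  have hf := isRadialDecay_one_sub_tanh_pow hβ n
  have h := (hf.tendsto_integral_comp_sum hX hmean hvar hindep hident).const_sub 1
  rw [sub_zero] at h
  refine h.congr fun m => ?_
  have hS : AEMeasurable (fun ω => ∑ k ∈ Finset.range m, X k ω) P :=
    Finset.aemeasurable_fun_sum _ fun k _ => (hident k).aemeasurable_fst
  have hg : Integrable (fun ω => tanh (β * ∑ k ∈ Finset.range m, X k ω) ^ (2 * n)) P := by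
    refine ((integrable_const 1).sub (hf.integrable_comp hS)).congr (.of_forall fun ω => ?_)
    simp
  rw [integral_sub (integrable_const 1) hg]
  simp

/-- Let `β > 0`, `n ≥ 1`, and `J` symmetric with `0 < E[J²] < ∞`; let `(J_ν)`
be i.i.d. copies of `J` and `M_α` Poisson of mean `2α`, independent of `(J_ν)`. Then
`q̃_{2n}(α) := E[tanh^{2n}(β ∑_{ν=1}^{M_α} J_ν)]` (written as a Poisson mixture) is
continuous on `[0,∞)`, vanishes at `0`, tends to `1` at `∞`, and attains every value
`x ∈ [0,1)`. -/
theorem trial_multioverlap_attains (β : ℝ) (hβ : 0 < β) (n : ℕ) (hn : 1 ≤ n)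
    (Ω : Type) [MeasureSpace Ω] [IsProbabilityMeasure (ℙ : Measure Ω)]
    (J : ℕ → Ω → ℝ) (hJmeas : ∀ ν, Measurable (J ν))
    (hJindep : iIndepFun J ℙ)
    (hJid : ∀ ν, IdentDistrib (J ν) (J 0) ℙ ℙ)
    (hJsymm : Measure.map (J 0) ℙ = Measure.map (fun ω => -J 0 ω) ℙ)
    (hJsq : Integrable (fun ω => (J 0 ω) ^ 2) ℙ)
    (hJpos : 0 < ∫ ω, (J 0 ω) ^ 2 ∂ℙ) :
    ContinuousOn
        (fun α : ℝ => ∑' m : ℕ, poissonWeight (2 * α) m *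
          ∫ ω, Real.tanh (β * ∑ ν ∈ Finset.range m, J ν ω) ^ (2 * n) ∂ℙ)
        (Set.Ici 0) ∧
      (∑' m : ℕ, poissonWeight (2 * 0) m *
          ∫ ω, Real.tanh (β * ∑ ν ∈ Finset.range m, J ν ω) ^ (2 * n) ∂ℙ) = 0 ∧
      Tendsto
        (fun α : ℝ => ∑' m : ℕ, poissonWeight (2 * α) m *
          ∫ ω, Real.tanh (β * ∑ ν ∈ Finset.range m, J ν ω) ^ (2 * n) ∂ℙ)
        atTop (nhds 1) ∧
      ∀ x ∈ Set.Ico (0 : ℝ) 1, ∃ α : ℝ, 0 ≤ α ∧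
        (∑' m : ℕ, poissonWeight (2 * α) m *
          ∫ ω, Real.tanh (β * ∑ ν ∈ Finset.range m, J ν ω) ^ (2 * n) ∂ℙ) = x := by
  set a : ℕ → ℝ := fun m => ∫ ω, tanh (β * ∑ ν ∈ Finset.range m, J ν ω) ^ (2 * n) ∂ℙ
  have hmean : ℙ[J 0] = 0 := integral_eq_zero_of_map_eq_map_neg (hJmeas 0).aemeasurable hJsymm
  have hvar : Var[J 0; ℙ] ≠ 0 := by
    rw [variance_of_integral_eq_zero (hJmeas 0).aemeasurable hmean]
    exact hJpos.ne'
  have ha_lim : Tendsto a atTop (𝓝 1) :=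
    tendsto_integral_tanh_mul_sum_pow
      ((memLp_two_iff_integrable_sq (hJmeas 0).aestronglyMeasurable).2 hJsq) hmean hvar hJindep
      hJid hβ.ne' n
  have ha_bdd (m : ℕ) : |a m| ≤ 1 := by
    have hbound : ∀ᵐ ω ∂ℙ, ‖tanh (β * ∑ ν ∈ Finset.range m, J ν ω) ^ (2 * n)‖ ≤ 1 :=
      .of_forall fun ω => abs_tanh_pow_le_one _ _
    simpa using norm_integral_le_of_norm_le_const hbound
  have ha_zero : a 0 = 0 := by simp [a, show 2 * n ≠ 0 by omega]
  have hcont := (continuous_tsum_poissonWeight_mul ha_bdd).comp (continuous_const_mul 2)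
  have hzero : ∑' m, poissonWeight (2 * 0) m * a m = 0 := by
    rw [mul_zero, tsum_poissonWeight_zero_mul, ha_zero]
  have hlim := (tendsto_tsum_poissonWeight_mul_atTop ha_lim).comp
    (tendsto_id.const_mul_atTop two_pos)
  refine ⟨hcont.continuousOn, hzero, hlim, fun x hx => ?_⟩
  obtain ⟨α, hα, rfl⟩ := isPreconnected_Ici.intermediate_value_Ico self_mem_Ici
    (le_principal_iff.2 (Ici_mem_atTop 0)) hcont.continuousOn hlim (hzero ▸ hx)
  exact ⟨α, hα, rfl⟩
end

section
/- Let β > 0, let J be a real random variable with symmetric distribution, and let W be a random variable with values in [−1,1], independent of J. Define J̃ := (1/β)·artanh(tanh(βJ)·W). Then J̃ is a well-defined real random variable with |J̃| ≤ |J| almost surely, J̃ has symmetric distribution, and for every integer n ≥ 1, E[tanh^{2n}(βJ̃)] = E[tanh^{2n}(βJ)]·E[W^{2n}]. -/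
/-!
Since `tanh ∘ artanh = id` on `(-1, 1)`, `tanh (β J̃) = tanh (β J) · W`, so the moment identity is
the factorisation `E[XY] = E[X] E[Y]` for the independent variables `tanh (β J) ^ 2n` and
`W ^ 2n`. The bound `|J̃| ≤ |J|` holds because `artanh` is odd and increasing and
`|tanh (β J) · W| ≤ |tanh (β J)|`. Finally `J̃` is an odd function of `J` for fixed `W`, and
independence together with the symmetry of `J` makes `(J, W)` and `(-J, W)` equal in law, so `J̃`
is symmetric.
-/

open MeasureTheory ProbabilityTheory

/-- The inverse hyperbolic tangent on `(−1,1)`: `artanh x = (1/2)·log((1+x)/(1−x))`. -/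
noncomputable def artanh (x : ℝ) : ℝ := Real.log ((1 + x) / (1 - x)) / 2

@[fun_prop]
lemma measurable_tanh : Measurable Real.tanh := by
  convert Real.measurable_sinh.div Real.measurable_cosh using 1
  exact funext Real.tanh_eq_sinh_div_cosh

@[fun_prop]
lemma measurable_artanh : Measurable artanh := by
  unfold artanh; fun_prop

lemma artanh_eq_real_artanh {x : ℝ} (hx : x ∈ Set.Icc (-1) 1) : artanh x = Real.artanh x := by
  rw [Real.artanh_eq_half_log hx, artanh]; ring

lemma artanh_neg (x : ℝ) : artanh (-x) = -artanh x := by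
  rw [artanh, artanh, ← neg_div, ← Real.log_inv, inv_div, sub_neg_eq_add, ← sub_eq_add_neg]

lemma tanh_artanh {x : ℝ} (hx : |x| < 1) : Real.tanh (artanh x) = x := by
  rw [artanh_eq_real_artanh (Set.Ioo_subset_Icc_self (abs_lt.mp hx)),
    Real.tanh_artanh (abs_lt.mp hx)]

lemma artanh_tanh (x : ℝ) : artanh (Real.tanh x) = x := by
  rw [artanh_eq_real_artanh (Set.Ioo_subset_Icc_self (abs_lt.mp (Real.abs_tanh_lt_one x))),
    Real.artanh_tanh]

lemma abs_artanh {x : ℝ} (hx : |x| ≤ 1) : |artanh x| = artanh |x| := by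
  have hreal := artanh_eq_real_artanh (abs_le.mp hx)
  rcases abs_cases x with ⟨hx', hx0⟩ | ⟨hx', hx0⟩
  · rw [hx', abs_of_nonneg (hreal ▸ Real.artanh_nonneg hx0)]
  · rw [hx', artanh_neg, abs_of_nonpos (hreal ▸ Real.artanh_nonpos hx0.le)]

lemma abs_artanh_le_abs_artanh {x y : ℝ} (hy : |y| < 1) (hxy : |x| ≤ |y|) :
    |artanh x| ≤ |artanh y| := by
  have hx : |x| < 1 := hxy.trans_lt hy
  rw [abs_artanh hx.le, abs_artanh hy.le,
    artanh_eq_real_artanh (Set.Icc_subset_Icc_left (by norm_num) ⟨abs_nonneg x, hx.le⟩),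
    artanh_eq_real_artanh (Set.Icc_subset_Icc_left (by norm_num) ⟨abs_nonneg y, hy.le⟩)]
  exact Real.artanh_le_artanh (by linarith [abs_nonneg x]) hy hxy

noncomputable def dilution (β x w : ℝ) : ℝ := 1 / β * artanh (Real.tanh (β * x) * w)

section dilution
variable {β x w : ℝ}

lemma abs_tanh_mul_lt_one (t : ℝ) (hw : |w| ≤ 1) : |Real.tanh t * w| < 1 := by
  rw [abs_mul]
  exact (mul_le_of_le_one_right (abs_nonneg _) hw).trans_lt (Real.abs_tanh_lt_one t)

lemma measurable_dilution : Measurable (Function.uncurry (dilution β)) := by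
  unfold Function.uncurry dilution; fun_prop

lemma Measurable.dilution {Ω : Type*} [MeasurableSpace Ω] {X Y : Ω → ℝ} (hX : Measurable X)
    (hY : Measurable Y) : Measurable fun ω => dilution β (X ω) (Y ω) :=
  measurable_dilution.comp (f := fun ω => (X ω, Y ω)) (hX.prodMk hY)

lemma dilution_neg : dilution β (-x) w = -dilution β x w := by
  rw [dilution, dilution, mul_neg, Real.tanh_neg, neg_mul, artanh_neg, mul_neg]

lemma tanh_mul_dilution (hβ : β ≠ 0) (hw : |w| ≤ 1) :
    Real.tanh (β * dilution β x w) = Real.tanh (β * x) * w := by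
  rw [dilution, ← mul_assoc, mul_one_div_cancel hβ, one_mul,
    tanh_artanh (abs_tanh_mul_lt_one _ hw)]

lemma abs_dilution_le (hw : |w| ≤ 1) : |dilution β x w| ≤ |x| := by
  have hbound : |artanh (Real.tanh (β * x) * w)| ≤ |β * x| := by
    simpa only [artanh_tanh] using abs_artanh_le_abs_artanh (Real.abs_tanh_lt_one (β * x))
      (by rw [abs_mul]; exact mul_le_of_le_one_right (abs_nonneg _) hw)
  calc |dilution β x w| ≤ |1 / β| * |β * x| := by
        rw [dilution, abs_mul]; exact mul_le_mul_of_nonneg_left hbound (abs_nonneg _)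
    _ = |1 / β * β| * |x| := by rw [abs_mul, abs_mul, mul_assoc]
    _ ≤ |x| := by
        rcases eq_or_ne β 0 with rfl | hβ
        · simp
        · rw [one_div_mul_cancel hβ, abs_one, one_mul]

end dilution

section symmetry
variable {Ω α γ : Type*} [MeasurableSpace Ω] {μ : Measure Ω} [IsFiniteMeasure μ]
  [MeasurableSpace α] [Neg α] [MeasurableNeg α] [MeasurableSpace γ] {X : Ω → α} {Y : Ω → γ}

lemma ProbabilityTheory.IndepFun.map_prodMk_neg_left (hX : Measurable X) (hY : Measurable Y)
    (hXY : IndepFun X Y μ) (hsymm : μ.map X = μ.map (fun ω => -X ω)) :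
    μ.map (fun ω => (-X ω, Y ω)) = μ.map (fun ω => (X ω, Y ω)) := by
  have hnegX : Measurable fun ω => -X ω := measurable_neg.comp hX
  rw [(indepFun_iff_map_prod_eq_prod_map_map hX.aemeasurable hY.aemeasurable).mp hXY,
    (indepFun_iff_map_prod_eq_prod_map_map hnegX.aemeasurable hY.aemeasurable).mp
      (hXY.comp measurable_neg measurable_id), hsymm]

lemma ProbabilityTheory.IndepFun.map_eq_map_neg_of_odd {E : Type*} [MeasurableSpace E] [Neg E]
    {f : α → γ → E} (hX : Measurable X) (hY : Measurable Y) (hXY : IndepFun X Y μ)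
    (hsymm : μ.map X = μ.map (fun ω => -X ω)) (hf : Measurable (Function.uncurry f))
    (hodd : ∀ a c, f (-a) c = -f a c) :
    μ.map (fun ω => f (X ω) (Y ω)) = μ.map (fun ω => -f (X ω) (Y ω)) := by
  have hneg : (fun ω => -f (X ω) (Y ω)) = Function.uncurry f ∘ fun ω => (-X ω, Y ω) := by
    ext ω; simp [hodd]
  have hpair : Measurable fun ω => (-X ω, Y ω) := (measurable_neg.comp hX).prodMk hY
  rw [hneg, ← Measure.map_map hf hpair, hXY.map_prodMk_neg_left hX hY hsymm,
    Measure.map_map hf (hX.prodMk hY)]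
  rfl

end symmetry

/-- For `β > 0`, `J` symmetric, `W` with values in `[−1,1]` independent of
`J`, the dilution `J̃ := (1/β)·artanh(tanh(βJ)·W)` is a well-defined (measurable) real
random variable with `|J̃| ≤ |J|` a.s., `J̃` is symmetric, and for every `n ≥ 1`,
`E[tanh^{2n}(βJ̃)] = E[tanh^{2n}(βJ)]·E[W^{2n}]`. -/
theorem diluted_coupling (β : ℝ) (hβ : 0 < β)
    (Ω : Type) [MeasureSpace Ω] [IsProbabilityMeasure (ℙ : Measure Ω)]
    (J W : Ω → ℝ) (hJmeas : Measurable J) (hWmeas : Measurable W)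
    (hJsymm : Measure.map J ℙ = Measure.map (fun ω => -J ω) ℙ)
    (hW : ∀ ω, W ω ∈ Set.Icc (-1 : ℝ) 1)
    (hindep : IndepFun J W ℙ) :
    Measurable (fun ω => (1 / β) * artanh (Real.tanh (β * J ω) * W ω)) ∧
    (∀ᵐ ω ∂ℙ, |(1 / β) * artanh (Real.tanh (β * J ω) * W ω)| ≤ |J ω|) ∧
    Measure.map (fun ω => (1 / β) * artanh (Real.tanh (β * J ω) * W ω)) ℙ
      = Measure.map (fun ω => -((1 / β) * artanh (Real.tanh (β * J ω) * W ω))) ℙ ∧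
    ∀ n : ℕ, 1 ≤ n →
      ∫ ω, Real.tanh (β * ((1 / β) * artanh (Real.tanh (β * J ω) * W ω))) ^ (2 * n) ∂ℙ
        = (∫ ω, Real.tanh (β * J ω) ^ (2 * n) ∂ℙ) * ∫ ω, (W ω) ^ (2 * n) ∂ℙ := by
  have hWabs : ∀ ω, |W ω| ≤ 1 := fun ω => abs_le.mpr (hW ω)
  refine ⟨?_, ?_, ?_, fun n _ => ?_⟩
  · exact hJmeas.dilution hWmeas
  · exact ae_of_all _ fun ω => abs_dilution_le (hWabs ω)
  · exact hindep.map_eq_map_neg_of_odd (f := dilution β) hJmeas hWmeas hJsymm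
      measurable_dilution fun _ _ => dilution_neg
  change ∫ ω, Real.tanh (β * dilution β (J ω) (W ω)) ^ (2 * n) ∂ℙ = _
  simp_rw [tanh_mul_dilution hβ.ne' (hWabs _), mul_pow]
  have htanh : Measurable fun x => Real.tanh (β * x) ^ (2 * n) := by fun_prop
  exact (hindep.comp htanh (measurable_id.pow_const _)).integral_fun_mul_eq_mul_integral
    (htanh.comp hJmeas).aestronglyMeasurable (hWmeas.pow_const _).aestronglyMeasurable
end
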